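/- arXiv:0907.3293 — 7 statements merged into one kernel-verified Lean document; each statement's English description precedes it below -/
import Mathlib

section
/- Let n ≥ 2 and let A be a real symmetric n×n matrix such that g * A * gᵀ = A for every g ∈ SO(n). Then A is a scalar matrix, i.e. A = c • 1 for some real number c. (Scalar matrices are the only fixed points of the action of SO(n) on Sym(n).) -/
open Matrix

lemma aux_key (n : ℕ) (A : Matrix (Fin n) (Fin n) ℝ) (hA : A.IsSymm)
    (hfix : ∀ g : Matrix (Fin n) (Fin n) ℝ,
      g * gᵀ = 1 → g.det = 1 → g * A * gᵀ = A)
    (i j : Fin n) (hij : i ≠ j) : A j j = A i i ∧ A i j = 0 := by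
  classical
  set σ : Equiv.Perm (Fin n) := Equiv.swap i j with hσ
  set d : Fin n → ℝ := fun k => if k = i then -1 else 1 with hd
  set D : Matrix (Fin n) (Fin n) ℝ := Matrix.diagonal d with hD
  set P : Matrix (Fin n) (Fin n) ℝ := σ.permMatrix ℝ with hP
  have hdd : (fun k => d k * d k) = fun _ : Fin n => (1:ℝ) := by
    funext k; by_cases h : k = i <;> simp [hd, h]
  have hDD : D * D = 1 := by
    rw [hD, Matrix.diagonal_mul_diagonal, hdd, Matrix.diagonal_one]
  have hDt : Dᵀ = D := Matrix.diagonal_transpose d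
  have hPt : Pᵀ = (σ⁻¹).permMatrix ℝ := by
    rw [hP, Equiv.Perm.permMatrix, ← PEquiv.toMatrix_symm, ← Equiv.toPEquiv_symm]
    rfl
  have hPPt : P * Pᵀ = 1 := by
    rw [hPt, hP, Equiv.Perm.permMatrix, Equiv.Perm.permMatrix,
      PEquiv.toMatrix_toPEquiv_mul]
    ext a b
    simp [Matrix.submatrix_apply, PEquiv.toMatrix_apply, Matrix.one_apply,
      Equiv.toPEquiv_apply, eq_comm, σ.apply_eq_iff_eq_symm_apply]
  set g : Matrix (Fin n) (Fin n) ℝ := D * P with hg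
  have h1 : g * gᵀ = 1 := by
    rw [hg, Matrix.transpose_mul, hDt, ← mul_assoc, mul_assoc D P Pᵀ, hPPt,
      mul_one, hDD]
  have h2 : g.det = 1 := by
    rw [hg, Matrix.det_mul, hD, Matrix.det_diagonal, hP, Matrix.det_permutation,
      hσ, Equiv.Perm.sign_swap hij]
    have : ∏ k, d k = -1 := by
      rw [show (-1 : ℝ) = d i * ∏ k ∈ Finset.univ.erase i, (1:ℝ) by simp [hd]]
      rw [← Finset.mul_prod_erase Finset.univ d (Finset.mem_univ i)]
      congr 1
      exact Finset.prod_congr rfl fun k hk => by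
        simp [hd, (Finset.mem_erase.mp hk).1]
    rw [this]; norm_num
  have hconj := hfix g h1 h2
  have hform : g * A * gᵀ = Matrix.of fun k l => d k * A (σ k) (σ l) * d l := by
    rw [hg, Matrix.transpose_mul, hDt, hPt]
    have e1 : P * A = A.submatrix σ id := by
      rw [hP]; exact PEquiv.toMatrix_toPEquiv_mul σ A
    have e2 : A.submatrix σ id * (σ⁻¹).permMatrix ℝ = A.submatrix σ σ := by
      rw [Equiv.Perm.permMatrix, PEquiv.mul_toMatrix_toPEquiv]
      ext a b
      simp [Matrix.submatrix_apply, Equiv.Perm.inv_def]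
    rw [mul_assoc D P A, e1, ← mul_assoc, mul_assoc D (A.submatrix σ id) _, e2]
    ext a b
    simp only [hD, Matrix.diagonal_mul, Matrix.mul_diagonal, Matrix.submatrix_apply,
      Matrix.of_apply]
  have happ : ∀ k l, d k * A (σ k) (σ l) * d l = A k l := by
    intro k l
    exact congrFun (congrFun (hform.symm.trans hconj) k) l
  constructor
  · have := happ i i
    simpa [hd, hσ, Equiv.swap_apply_left] using this
  · have hs : A i j = A j i := by
      have := congrFun (congrFun hA.eq j) i
      simpa [Matrix.transpose_apply] using this
    have := happ i j
    simp [hd, hσ, Equiv.swap_apply_left, Equiv.swap_apply_right, hij.symm] at this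
    linarith

/-- Scalar matrices are the only fixed points of the conjugation action of
SO(n) on symmetric matrices. -/
theorem fixed_point_of_SO_is_scalar
    (n : ℕ) (hn : 2 ≤ n) (A : Matrix (Fin n) (Fin n) ℝ) (hA : A.IsSymm)
    (hfix : ∀ g : Matrix (Fin n) (Fin n) ℝ,
      g * gᵀ = 1 → g.det = 1 → g * A * gᵀ = A) :
    ∃ c : ℝ, A = c • (1 : Matrix (Fin n) (Fin n) ℝ) := by
  have hn0 : 0 < n := by omega
  set z : Fin n := ⟨0, hn0⟩ with hz
  refine ⟨A z z, ?_⟩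
  ext i j
  by_cases hij : i = j
  · subst hij
    by_cases hiz : i = z
    · subst hiz; simp
    · have := (aux_key n A hA hfix z i (fun h => hiz h.symm)).1
      simp [this]
  · have := (aux_key n A hA hfix i j hij).2
    simp [this, Matrix.one_apply, hij]
end

section
/- Let n ≥ 2 and let M be the set of real symmetric n×n matrices having a multiple eigenvalue. Then the vanishing ideal of M is prime: the ideal { p ∈ MvPolynomial ((Fin n) × (Fin n)) ℝ | for every A ∈ M, evaluating p at the point (i,j) ↦ A i j gives 0 } is a prime ideal of the polynomial ring. (The discriminant surface M is an algebraically prime variety.) -/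
/-!
A real symmetric matrix has a multiple eigenvalue iff it is `Q D Qᵀ` with `Q` orthogonal and `D`
diagonal with `D i₀ i₀ = D i₁ i₁` for two fixed indices `i₀ ≠ i₁` (permute the eigenbasis).
By Cartan–Dieudonné, `Q` is a product of at most `n` Householder reflections; padding with the
reflection in a coordinate vector, which is diagonal and hence commutes with `D`, makes it exactly
`n`. Clearing denominators, `(v ⬝ᵥ v) • 1 - 2 • vvᵀ` is polynomial in `v`, and for every product
`N` of such matrices `Nᵀ N` is a scalar, so `N D Nᵀ` always has a multiple eigenvalue. Hence `M` is
the image of a polynomial map from an affine space, and its vanishing ideal is the kernel of a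
ring map into a polynomial ring, a domain.
-/

open Matrix

/-- The set of real symmetric n×n matrices having a multiple eigenvalue. -/
def discSurface (n : ℕ) : Set (Matrix (Fin n) (Fin n) ℝ) :=
  {A | A.IsSymm ∧ ∃ c : ℝ, (Polynomial.X - Polynomial.C c) ^ 2 ∣ A.charpoly}

/-- The ideal of all polynomials in the matrix entries vanishing on a set of
matrices. -/
noncomputable def vanishingIdealOf (n : ℕ) (S : Set (Matrix (Fin n) (Fin n) ℝ)) :
    Ideal (MvPolynomial (Fin n × Fin n) ℝ) where
  carrier := {p | ∀ A ∈ S, MvPolynomial.eval (fun q => A q.1 q.2) p = 0}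
  add_mem' := by
    intro a b ha hb A hA
    simp [ha A hA, hb A hA]
  zero_mem' := by intro A hA; simp
  smul_mem' := by
    intro c p hp A hA
    simp [smul_eq_mul, hp A hA]

theorem vanishingIdealOf_range_eq_ker {n : ℕ} {σ : Type*}
    (Ψ : Matrix (Fin n) (Fin n) (MvPolynomial σ ℝ)) :
    vanishingIdealOf n (Set.range fun x => Ψ.map (MvPolynomial.eval x)) =
      RingHom.ker (MvPolynomial.bind₁ fun q : Fin n × Fin n => Ψ q.1 q.2) := by
  ext p
  change (∀ A ∈ Set.range _, _) ↔ _
  rw [RingHom.mem_ker, MvPolynomial.funext_iff]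
  simp only [Set.forall_mem_range, map_zero, MvPolynomial.eval, MvPolynomial.eval₂Hom_bind₁]
  rfl

namespace Matrix

variable {ι K R S : Type*} [Fintype ι] [DecidableEq ι]

section CommRing

variable [CommRing R] [CommRing S]

def scaledHouseholder (v : ι → R) : Matrix ι ι R :=
  (v ⬝ᵥ v) • 1 - (2 : R) • vecMulVec v v

theorem scaledHouseholder_transpose (v : ι → R) :
    (scaledHouseholder v)ᵀ = scaledHouseholder v := by
  simp [scaledHouseholder]

theorem scaledHouseholder_mul_self (v : ι → R) :
    scaledHouseholder v * scaledHouseholder v = (v ⬝ᵥ v) ^ 2 • 1 := by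
  simp only [scaledHouseholder, sub_mul, mul_sub, smul_mul_smul_comm, one_mul, mul_one,
    vecMulVec_mul_vecMulVec, vecMulVec_smul]
  module

theorem scaledHouseholder_map (f : R →+* S) (v : ι → R) :
    (scaledHouseholder v).map f = scaledHouseholder (f ∘ v) := by
  ext i j
  simp [scaledHouseholder, dotProduct, one_apply, vecMulVec_apply, apply_ite f, map_ofNat]

def householderProd {m : ℕ} (w : Fin m → ι → R) : Matrix ι ι R :=
  (List.ofFn fun k => scaledHouseholder (w k)).prod

def householderConj {m : ℕ} (w : Fin m → ι → R) (d : ι → R) : Matrix ι ι R :=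
  householderProd w * diagonal d * (householderProd w)ᵀ

theorem transpose_mul_householderProd {m : ℕ} (w : Fin m → ι → R) :
    (householderProd w)ᵀ * householderProd w = (∏ k, (w k ⬝ᵥ w k) ^ 2) • 1 := by
  induction m with
  | zero => simp [householderProd]
  | succ m ih =>
    have h := ih (fun k => w k.succ)
    simp only [householderProd, List.ofFn_succ, List.prod_cons] at h ⊢
    rw [transpose_mul, mul_assoc, ← mul_assoc (scaledHouseholder (w 0))ᵀ,
      scaledHouseholder_transpose, scaledHouseholder_mul_self, Matrix.smul_mul, one_mul,
      Matrix.mul_smul, h, smul_smul, Fin.prod_univ_succ]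

theorem householderConj_map (f : R →+* S) {m : ℕ} (w : Fin m → ι → R) (d : ι → R) :
    (householderConj w d).map f = householderConj (fun k => f ∘ w k) (f ∘ d) := by
  have hprod : (householderProd w).map f = householderProd fun k => f ∘ w k := by
    change f.mapMatrix _ = _
    simp only [householderProd, map_list_prod, List.map_ofFn, Function.comp_def]
    simp only [RingHom.mapMatrix_apply, scaledHouseholder_map]
    rfl
  rw [householderConj, householderConj, Matrix.map_mul, Matrix.map_mul, transpose_map, hprod,
    diagonal_map (map_zero f)]
  rfl

open Polynomial in
theorem charpoly_mul_diagonal_mul_transpose {N : Matrix ι ι R} {c : R} (hN : Nᵀ * N = c • 1)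
    (d : ι → R) : (N * diagonal d * Nᵀ).charpoly = ∏ i, (X - C (c * d i)) := by
  rw [charpoly_mul_comm, ← mul_assoc, hN, Matrix.smul_mul, one_mul, ← diagonal_smul,
    charpoly_diagonal]
  rfl

end CommRing

section Field

variable [Field K]

def householder (v : ι → K) : Matrix ι ι K :=
  1 - (2 / (v ⬝ᵥ v)) • vecMulVec v v

theorem householder_transpose (v : ι → K) : (householder v)ᵀ = householder v := by
  simp [householder]

theorem householder_mulVec (v y : ι → K) :
    householder v *ᵥ y = y - (2 / (v ⬝ᵥ v) * (v ⬝ᵥ y)) • v := by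
  rw [householder, sub_mulVec, one_mulVec, smul_mulVec, vecMulVec_mulVec, op_smul_eq_smul,
    smul_smul]

theorem householder_mul_self {v : ι → K} (hv : v ⬝ᵥ v ≠ 0) :
    householder v * householder v = 1 := by
  simp only [householder, sub_mul, mul_sub, one_mul, mul_one, smul_mul_smul_comm,
    vecMulVec_mul_vecMulVec, vecMulVec_smul, smul_smul]
  rw [show 2 / (v ⬝ᵥ v) * (2 / (v ⬝ᵥ v)) * (v ⬝ᵥ v) = 2 / (v ⬝ᵥ v) + 2 / (v ⬝ᵥ v) by
    field_simp; ring, add_smul]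
  abel

theorem scaledHouseholder_eq_smul_householder {v : ι → K} (hv : v ⬝ᵥ v ≠ 0) :
    scaledHouseholder v = (v ⬝ᵥ v) • householder v := by
  rw [scaledHouseholder, householder, smul_sub, smul_smul, mul_div_cancel₀ _ hv]

theorem transpose_mul_self_householder_mul {v : ι → K} (hv : v ⬝ᵥ v ≠ 0) {Q : Matrix ι ι K}
    (hQ : Qᵀ * Q = 1) : (householder v * Q)ᵀ * (householder v * Q) = 1 := by
  rw [transpose_mul, householder_transpose, mul_assoc, ← mul_assoc (householder v),
    householder_mul_self hv, one_mul, hQ]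

theorem householder_sub_mulVec_of_mulVec_eq {Q : Matrix ι ι K} (hQ : Qᵀ * Q = 1) (x : ι → K)
    {y : ι → K} (hy : Q *ᵥ y = y) : householder (Q *ᵥ x - x) *ᵥ y = y := by
  have horth : (Q *ᵥ x) ⬝ᵥ y = x ⬝ᵥ y := by
    conv_lhs => rw [← hy]
    rw [dotProduct_mulVec, vecMul_mulVec, hQ, vecMul_one]
  rw [householder_mulVec, sub_dotProduct (Q *ᵥ x) x y, horth, sub_self, mul_zero, zero_smul,
    sub_zero]

theorem householder_single_one (i : ι) :
    householder (Pi.single i 1 : ι → K) = diagonal (Function.update 1 i (-1)) := by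
  ext j k
  rcases eq_or_ne j k with rfl | hjk
  · rcases eq_or_ne j i with rfl | hj
    · norm_num [householder, vecMulVec_apply]
    · simp [householder, vecMulVec_apply, hj]
  · simp [householder, vecMulVec_apply, hjk, Pi.single_apply]
    grind

theorem list_prod_map_scaledHouseholder (L : List (ι → K)) (hL : ∀ v ∈ L, v ⬝ᵥ v ≠ 0) :
    (L.map scaledHouseholder).prod = (L.map fun v => v ⬝ᵥ v).prod • (L.map householder).prod := by
  induction L with
  | nil => simp
  | cons v L ih =>
    simp only [List.map_cons, List.prod_cons]
    rw [scaledHouseholder_eq_smul_householder (hL v List.mem_cons_self),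
      ih fun u hu => hL u (List.mem_cons_of_mem v hu), smul_mul_smul_comm]

end Field

section LinearOrderedField

variable [Field K] [LinearOrder K] [IsStrictOrderedRing K]

theorem householder_sub_mulVec_mulVec {Q : Matrix ι ι K} (hQ : Qᵀ * Q = 1) (x : ι → K) :
    householder (Q *ᵥ x - x) *ᵥ (Q *ᵥ x) = x := by
  have horth : (Q *ᵥ x) ⬝ᵥ (Q *ᵥ x) = x ⬝ᵥ x := by
    rw [dotProduct_mulVec, vecMul_mulVec, hQ, vecMul_one]
  set a := x ⬝ᵥ x - x ⬝ᵥ (Q *ᵥ x)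
  have hvv : (Q *ᵥ x - x) ⬝ᵥ (Q *ᵥ x - x) = 2 * a := by
    simp only [a, sub_dotProduct, dotProduct_sub, horth, dotProduct_comm (Q *ᵥ x) x]
    ring
  have hvQx : (Q *ᵥ x - x) ⬝ᵥ (Q *ᵥ x) = a := by
    rw [sub_dotProduct, horth, dotProduct_comm]
  rcases eq_or_ne a 0 with ha | ha
  · rw [ha, mul_zero, dotProduct_self_eq_zero, sub_eq_zero] at hvv
    rw [hvv, sub_self, householder_mulVec, smul_zero, sub_zero]
  · have hcoef : 2 / (2 * a) * a = 1 := by field_simp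
    rw [householder_mulVec, hvv, hvQx, hcoef, one_smul, sub_sub_cancel]

theorem exists_list_householder_prod_of_mulVec_single_eq (s : Finset ι) {Q : Matrix ι ι K}
    (hQ : Qᵀ * Q = 1) (hfix : ∀ j ∉ s, Q *ᵥ Pi.single j 1 = Pi.single j 1) :
    ∃ L : List (ι → K), L.length ≤ s.card ∧ (∀ v ∈ L, v ≠ 0) ∧ Q = (L.map householder).prod := by
  induction s using Finset.induction_on generalizing Q with
  | empty =>
    refine ⟨[], le_rfl, by simp, ?_⟩
    exact ext_of_mulVec_single fun j => by rw [hfix j (Finset.notMem_empty j), List.map_nil,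
      List.prod_nil, one_mulVec]
  | insert a s ha ih =>
    set x : ι → K := Pi.single a 1
    by_cases hx : Q *ᵥ x = x
    · have hfix' : ∀ j ∉ s, Q *ᵥ Pi.single j 1 = Pi.single j 1 := fun j hj => by
        by_cases hja : j = a
        · rw [hja, hx]
        · exact hfix j (by simp [hja, hj])
      obtain ⟨L, hlen, hne, hL⟩ := ih hQ hfix'
      exact ⟨L, hlen.trans (s.card_le_card (s.subset_insert a)), hne, hL⟩
    · set v := Q *ᵥ x - x
      have hv : v ≠ 0 := sub_ne_zero.mpr hx
      have hvv : v ⬝ᵥ v ≠ 0 := dotProduct_self_eq_zero.not.mpr hv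
      have hfix' : ∀ j ∉ s, (householder v * Q) *ᵥ Pi.single j 1 = Pi.single j 1 := by
        intro j hj
        rw [← mulVec_mulVec]
        by_cases hja : j = a
        · rw [hja, householder_sub_mulVec_mulVec hQ]
        · have hQj := hfix j (by simp [hja, hj])
          rw [hQj, householder_sub_mulVec_of_mulVec_eq hQ x hQj]
      obtain ⟨L, hlen, hne, hL⟩ := ih (transpose_mul_self_householder_mul hvv hQ) hfix'
      refine ⟨v :: L, ?_, ?_, ?_⟩
      · simpa [Finset.card_insert_of_notMem ha] using hlen
      · simpa [hv] using hne
      · rw [List.map_cons, List.prod_cons, ← hL, ← mul_assoc, householder_mul_self hvv, one_mul]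

theorem exists_list_householder_prod {Q : Matrix ι ι K} (hQ : Qᵀ * Q = 1) :
    ∃ L : List (ι → K), L.length ≤ Fintype.card ι ∧ (∀ v ∈ L, v ≠ 0) ∧
      Q = (L.map householder).prod :=
  exists_list_householder_prod_of_mulVec_single_eq Finset.univ hQ (by simp)

theorem exists_householderProd_eq_smul_mul_diagonal {Q : Matrix ι ι K} (hQ : Qᵀ * Q = 1)
    (i : ι) {m : ℕ} (hm : Fintype.card ι ≤ m) :
    ∃ (w : Fin m → ι → K) (s : K) (e : ι → K), s ≠ 0 ∧ (∀ j, e j * e j = 1) ∧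
      householderProd w = s • (Q * diagonal e) := by
  obtain ⟨L, hlen, hne, hL⟩ := exists_list_householder_prod hQ
  set k := m - L.length
  set L' := L ++ List.replicate k (Pi.single i 1)
  have hL' : ∀ v ∈ L', v ⬝ᵥ v ≠ 0 := by
    intro v hv
    rcases List.mem_append.mp hv with hv | hv
    · exact dotProduct_self_eq_zero.not.mpr (hne v hv)
    · simp [List.eq_of_mem_replicate hv]
  have hlen' : L'.length = m := by simp [L']; omega
  obtain ⟨w, hw⟩ : ∃ w : Fin m → ι → K, List.ofFn w = L' :=
    ⟨fun t => L'.get (t.cast hlen'.symm), by rw [← List.ofFn_congr hlen', List.ofFn_get]⟩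
  refine ⟨w, (L'.map fun v => v ⬝ᵥ v).prod, Function.update (1 : ι → K) i (-1) ^ k, ?_, ?_, ?_⟩
  · refine List.prod_ne_zero fun h0 => ?_
    obtain ⟨v, hv, hvv⟩ := List.mem_map.mp h0
    exact hL' v hv hvv
  · intro j
    rw [Pi.pow_apply, ← mul_pow]
    rcases eq_or_ne j i with rfl | hj <;> simp [*]
  · rw [householderProd, List.ofFn_comp', hw, list_prod_map_scaledHouseholder L' hL']
    congr 1
    rw [List.map_append, List.prod_append, ← hL, List.map_replicate, List.prod_replicate,
      householder_single_one, diagonal_pow]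

end LinearOrderedField

theorem IsSymm.exists_orthogonal_diagonal {A : Matrix ι ι ℝ} (hA : A.IsSymm) :
    ∃ (U : Matrix ι ι ℝ) (μ : ι → ℝ), Uᵀ * U = 1 ∧ A = U * diagonal μ * Uᵀ := by
  have hH : A.IsHermitian := by rwa [IsHermitian, conjTranspose_eq_transpose_of_trivial]
  refine ⟨hH.eigenvectorUnitary, hH.eigenvalues, ?_, ?_⟩
  · simpa [star_eq_conjTranspose] using Unitary.coe_star_mul_self hH.eigenvectorUnitary
  · simpa [Unitary.conjStarAlgAut_apply, star_eq_conjTranspose] using hH.spectral_theorem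

theorem submatrix_id_mul_diagonal_mul_transpose [CommRing R] (U : Matrix ι ι R)
    (μ : ι → R) (σ : Equiv.Perm ι) :
    U.submatrix id σ * diagonal (μ ∘ σ) * (U.submatrix id σ)ᵀ = U * diagonal μ * Uᵀ := by
  rw [transpose_submatrix, ← submatrix_diagonal_equiv, submatrix_mul_equiv,
    submatrix_mul_equiv, submatrix_id_id]

end Matrix

theorem Equiv.Perm.exists_apply_eq_and_apply_eq {ι : Type*} [DecidableEq ι] {i₀ i₁ i j : ι}
    (h₀₁ : i₀ ≠ i₁) (hij : i ≠ j) : ∃ σ : Equiv.Perm ι, σ i₀ = i ∧ σ i₁ = j := by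
  set j' := Equiv.swap i₀ i j
  have hj' : j' ≠ i₀ := by
    rwa [Ne, Equiv.swap_apply_eq_iff, Equiv.swap_apply_left, eq_comm]
  refine ⟨(Equiv.swap i₁ j').trans (Equiv.swap i₀ i), ?_, ?_⟩
  · rw [Equiv.trans_apply, Equiv.swap_apply_of_ne_of_ne h₀₁ hj'.symm, Equiv.swap_apply_left]
  · rw [Equiv.trans_apply, Equiv.swap_apply_left, Equiv.swap_apply_self]

open Polynomial in
theorem Polynomial.exists_ne_of_sq_dvd_prod_X_sub_C {R ι : Type*} [CommRing R] [IsDomain R]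
    [Fintype ι] {μ : ι → R} {c : R} (h : (X - C c) ^ 2 ∣ ∏ i, (X - C (μ i))) :
    ∃ i j, i ≠ j ∧ μ i = c ∧ μ j = c := by
  classical
  have hroots : (∏ i, (X - C (μ i))).roots = Finset.univ.val.map μ := by
    rw [Finset.prod_eq_multiset_prod, ← roots_multiset_prod_X_sub_C (Finset.univ.val.map μ),
      Multiset.map_map]
    rfl
  have hne : ∏ i, (X - C (μ i)) ≠ 0 := (monic_prod_of_monic _ _ fun i _ => monic_X_sub_C _).ne_zero
  have hcount : 2 ≤ (Finset.univ.val.map μ).count c := by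
    rwa [← hroots, count_roots, le_rootMultiplicity_iff hne]
  have hcard : 1 < (Finset.univ.filter fun i => c = μ i).card := by
    rwa [Multiset.count_map] at hcount
  obtain ⟨i, hi, j, hj, hij⟩ := Finset.one_lt_card.mp hcard
  exact ⟨i, j, hij, (Finset.mem_filter.mp hi).2.symm, (Finset.mem_filter.mp hj).2.symm⟩

open Polynomial in
theorem mem_discSurface_of_charpoly_eq {n : ℕ} {A : Matrix (Fin n) (Fin n) ℝ} (hA : A.IsSymm)
    {μ : Fin n → ℝ} (hchar : A.charpoly = ∏ i, (X - C (μ i))) {i₀ i₁ : Fin n} (h₀₁ : i₀ ≠ i₁)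
    (hμ : μ i₀ = μ i₁) : A ∈ discSurface n := by
  refine ⟨hA, μ i₀, ?_⟩
  rw [hchar, sq]
  nth_rewrite 2 [hμ]
  rw [← Finset.prod_pair (f := fun i => X - C (μ i)) h₀₁]
  exact Finset.prod_dvd_prod_of_subset _ _ _ (Finset.subset_univ _)

theorem householderConj_mem_discSurface {n m : ℕ} (w : Fin m → Fin n → ℝ) {d : Fin n → ℝ}
    {i₀ i₁ : Fin n} (h₀₁ : i₀ ≠ i₁) (hd : d i₀ = d i₁) : householderConj w d ∈ discSurface n := by
  refine mem_discSurface_of_charpoly_eq ?_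
    (charpoly_mul_diagonal_mul_transpose (transpose_mul_householderProd w) d) h₀₁ (by rw [hd])
  simp [householderConj, IsSymm, Matrix.mul_assoc]

theorem exists_orthogonal_diagonal_of_mem_discSurface {n : ℕ} {A : Matrix (Fin n) (Fin n) ℝ}
    (hA : A ∈ discSurface n) {i₀ i₁ : Fin n} (h₀₁ : i₀ ≠ i₁) :
    ∃ (Q : Matrix (Fin n) (Fin n) ℝ) (μ : Fin n → ℝ),
      Qᵀ * Q = 1 ∧ μ i₀ = μ i₁ ∧ A = Q * diagonal μ * Qᵀ := by
  obtain ⟨hsymm, c, hc⟩ := hA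
  obtain ⟨U, μ, hU, rfl⟩ := hsymm.exists_orthogonal_diagonal
  rw [charpoly_mul_diagonal_mul_transpose (c := 1) (by rw [hU, one_smul])] at hc
  simp only [one_mul] at hc
  obtain ⟨i, j, hij, hi, hj⟩ := Polynomial.exists_ne_of_sq_dvd_prod_X_sub_C hc
  obtain ⟨σ, hσ₀, hσ₁⟩ := Equiv.Perm.exists_apply_eq_and_apply_eq h₀₁ hij
  refine ⟨U.submatrix id σ, μ ∘ σ, ?_, by simp [hσ₀, hσ₁, hi, hj],
    (submatrix_id_mul_diagonal_mul_transpose U μ σ).symm⟩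
  rw [transpose_submatrix, ← submatrix_mul _ _ _ _ _ Function.bijective_id, hU,
    submatrix_one_equiv]

theorem exists_householderConj_eq_of_mem_discSurface {n : ℕ} {A : Matrix (Fin n) (Fin n) ℝ}
    (hA : A ∈ discSurface n) {i₀ i₁ : Fin n} (h₀₁ : i₀ ≠ i₁) :
    ∃ (w : Fin n → Fin n → ℝ) (d : Fin n → ℝ), d i₀ = d i₁ ∧ householderConj w d = A := by
  obtain ⟨Q, μ, hQ, hμ, rfl⟩ := exists_orthogonal_diagonal_of_mem_discSurface hA h₀₁
  obtain ⟨w, s, e, hs, he, hw⟩ :=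
    exists_householderProd_eq_smul_mul_diagonal hQ i₀ (m := n) (by simp)
  refine ⟨w, (s ^ 2)⁻¹ • μ, by simp [hμ], ?_⟩
  have hdiag : diagonal e * diagonal ((s ^ 2)⁻¹ • μ) * (diagonal e)ᵀ = (s ^ 2)⁻¹ • diagonal μ := by
    rw [diagonal_transpose, diagonal_mul_diagonal, diagonal_mul_diagonal, ← diagonal_smul]
    congr 1
    funext j
    simp only [Pi.smul_apply, smul_eq_mul]
    linear_combination (s ^ 2)⁻¹ * μ j * he j
  calc householderConj w ((s ^ 2)⁻¹ • μ)
      = s ^ 2 • (Q * (diagonal e * diagonal ((s ^ 2)⁻¹ • μ) * (diagonal e)ᵀ) * Qᵀ) := by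
        simp only [householderConj, hw, transpose_smul, transpose_mul, Matrix.smul_mul,
          Matrix.mul_smul, smul_smul, Matrix.mul_assoc, sq]
    _ = Q * diagonal μ * Qᵀ := by
        rw [hdiag, Matrix.mul_smul, Matrix.smul_mul, smul_smul, mul_inv_cancel₀ (pow_ne_zero 2 hs),
          one_smul]

/-- The coordinates `x (.inl (k, l))` are the entries of `n` Householder vectors and
`x (.inr i)` those of the diagonal, whose entry at `i₀` is tied to the one at `i₁`. -/
def discSurfaceParam {R : Type*} [CommRing R] {n : ℕ} (i₀ i₁ : Fin n)
    (x : (Fin n × Fin n) ⊕ Fin n → R) : Matrix (Fin n) (Fin n) R :=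
  householderConj (fun k l => x (.inl (k, l)))
    (Function.update (fun i => x (.inr i)) i₀ (x (.inr i₁)))

theorem discSurfaceParam_map {R S : Type*} [CommRing R] [CommRing S] (f : R →+* S) {n : ℕ}
    (i₀ i₁ : Fin n) (x : (Fin n × Fin n) ⊕ Fin n → R) :
    (discSurfaceParam i₀ i₁ x).map f = discSurfaceParam i₀ i₁ (f ∘ x) := by
  rw [discSurfaceParam, householderConj_map, Function.comp_update]
  rfl

theorem range_discSurfaceParam {n : ℕ} {i₀ i₁ : Fin n} (h₀₁ : i₀ ≠ i₁) :
    Set.range (discSurfaceParam (R := ℝ) i₀ i₁) = discSurface n := by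
  ext A
  constructor
  · rintro ⟨x, rfl⟩
    exact householderConj_mem_discSurface _ h₀₁ (by simp [Function.update_of_ne h₀₁.symm])
  · intro hA
    obtain ⟨w, d, hd, rfl⟩ := exists_householderConj_eq_of_mem_discSurface hA h₀₁
    refine ⟨Sum.elim (fun kl => w kl.1 kl.2) d, ?_⟩
    simp [discSurfaceParam, ← hd]

/-- The vanishing ideal of the discriminant surface is prime: the surface is
an algebraically prime variety. -/
theorem discSurface_vanishingIdeal_isPrime (n : ℕ) (hn : 2 ≤ n) :
    (vanishingIdealOf n (discSurface n)).IsPrime := by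
  have : Nontrivial (Fin n) := Fin.nontrivial_iff_two_le.mpr hn
  obtain ⟨i₀, i₁, h₀₁⟩ := exists_pair_ne (Fin n)
  have hrange : discSurface n =
      Set.range fun x => (discSurfaceParam i₀ i₁ MvPolynomial.X).map (MvPolynomial.eval x) := by
    simp only [discSurfaceParam_map, Function.comp_def, MvPolynomial.eval_X]
    exact (range_discSurfaceParam h₀₁).symm
  rw [hrange, vanishingIdealOf_range_eq_ker]
  exact RingHom.ker_isPrime _
end

section
/- Let A be a real symmetric n×n matrix (n ≥ 1) with eigenvalues λ₁, …, λₙ listed with multiplicity (i.e. the characteristic polynomial of A equals ∏ᵢ (X − λᵢ)), and let m = (λ₁ + ⋯ + λₙ)/n. Then the diameter dm of the orbit Orbit(A) = {g * A * gᵀ : g ∈ SO(n)}, measured in the Frobenius metric, satisfies maxᵢⱼ |λᵢ − λⱼ| ≤ dm ≤ 2·‖A − m•1‖, where ‖A − m•1‖ is the Frobenius distance from A to the line of scalar matrices. -/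
open Matrix

attribute [local instance] Matrix.frobeniusNormedAddCommGroup

/-! The orbit lies on the sphere of radius `‖A - m • 1‖` around the scalar matrix `m • 1`, because
conjugation by an orthogonal matrix is a Frobenius isometry fixing `m • 1`; this gives the upper
bound. For the lower bound, the spectral theorem puts every diagonal matrix `diagonal (l ∘ σ)` in
the orbit (a reflection commuting with diagonal matrices corrects the sign of the determinant), and
`diagonal l` and `diagonal (l ∘ swap i j)` are at distance at least `|l i - l j|`. -/

open Polynomial Metric

theorem Function.exists_perm_eq_comp_of_map_univ_eq {ι α : Type*} [Fintype ι] [DecidableEq α]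
    {f g : ι → α} (h : Finset.univ.val.map f = Finset.univ.val.map g) :
    ∃ σ : Equiv.Perm ι, f = g ∘ σ := by
  have hfiber (c : α) : Fintype.card {i // f i = c} = Fintype.card {i // g i = c} := by
    have := congrArg (Multiset.count c) h
    simp only [Multiset.count_map, eq_comm (a := c)] at this
    simpa only [Fintype.card_subtype, Finset.card, Finset.filter_val] using this
  refine ⟨Equiv.ofFiberEquiv fun c => Fintype.equivOfCardEq (hfiber c), ?_⟩
  funext i
  exact (Equiv.ofFiberEquiv_map _ i).symm

theorem Polynomial.roots_prod_univ_X_sub_C {ι R : Type*} [Fintype ι] [CommRing R] [IsDomain R]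
    (l : ι → R) : (∏ i, (X - C (l i))).roots = Finset.univ.val.map l := by
  rw [roots_prod _ _ (Finset.prod_ne_zero_iff.mpr fun i _ => X_sub_C_ne_zero (l i))]
  simp

namespace Matrix

theorem frobenius_norm_eq_sqrt_trace_mul_transpose {m n : Type*} [Fintype m] [Fintype n]
    (M : Matrix m n ℝ) : ‖M‖ = √(M * Mᵀ).trace := by
  rw [frobenius_norm_def, Real.sqrt_eq_rpow]
  congr 1
  simp only [Real.rpow_two, Real.norm_eq_abs, sq, abs_mul_abs_self, trace, diag, mul_apply,
    transpose_apply]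

variable {ι : Type*} [Fintype ι] [DecidableEq ι]

theorem frobenius_norm_conj_of_mem_orthogonalGroup {g : Matrix ι ι ℝ}
    (hg : g ∈ orthogonalGroup ι ℝ) (M : Matrix ι ι ℝ) : ‖g * M * gᵀ‖ = ‖M‖ := by
  have hgg : gᵀ * g = 1 := (mem_orthogonalGroup_iff' ι ℝ).mp hg
  have hconj : g * M * gᵀ * (g * M * gᵀ)ᵀ = g * (M * Mᵀ) * gᵀ := by
    simp only [transpose_mul, transpose_transpose, Matrix.mul_assoc]
    rw [← Matrix.mul_assoc gᵀ g, hgg, Matrix.one_mul]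
  rw [frobenius_norm_eq_sqrt_trace_mul_transpose, frobenius_norm_eq_sqrt_trace_mul_transpose,
    hconj, trace_mul_cycle, hgg, Matrix.one_mul]

theorem permMatrix_mem_orthogonalGroup {R : Type*} [CommRing R] (σ : Equiv.Perm ι) :
    σ.permMatrix R ∈ orthogonalGroup ι R := by
  rw [mem_orthogonalGroup_iff, transpose_permMatrix, ← permMatrix_mul, inv_mul_cancel,
    permMatrix_one]

theorem permMatrix_mul_diagonal_mul_transpose {R : Type*} [CommRing R] (σ : Equiv.Perm ι)
    (d : ι → R) : σ.permMatrix R * diagonal d * (σ.permMatrix R)ᵀ = diagonal (d ∘ σ) := by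
  rw [← PEquiv.toMatrix_symm, ← Equiv.toPEquiv_symm, PEquiv.toMatrix_toPEquiv_mul,
    PEquiv.mul_toMatrix_toPEquiv, Equiv.symm_symm, submatrix_submatrix,
    Function.comp_id, Function.id_comp, submatrix_diagonal d σ σ.injective]

theorem IsHermitian.transpose_eigenvectorUnitary_mem_orthogonalGroup {A : Matrix ι ι ℝ}
    (hA : A.IsHermitian) : (hA.eigenvectorUnitary : Matrix ι ι ℝ)ᵀ ∈ orthogonalGroup ι ℝ := by
  rw [mem_orthogonalGroup_iff, transpose_transpose, ← mem_orthogonalGroup_iff']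
  exact hA.eigenvectorUnitary.2

theorem IsHermitian.transpose_eigenvectorUnitary_conj_eq_diagonal {A : Matrix ι ι ℝ}
    (hA : A.IsHermitian) :
    (hA.eigenvectorUnitary : Matrix ι ι ℝ)ᵀ * A * (hA.eigenvectorUnitary : Matrix ι ι ℝ)ᵀᵀ =
      diagonal hA.eigenvalues := by
  have h := hA.conjStarAlgAut_star_eigenvectorUnitary
  rw [Unitary.conjStarAlgAut_apply, RCLike.ofReal_real_eq_id, Function.id_comp] at h
  simpa [star_eq_conjTranspose] using h

theorem IsSymm.exists_mem_orthogonalGroup_conj_eq_diagonal {A : Matrix ι ι ℝ} (hA : A.IsSymm)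
    {l : ι → ℝ} (hl : A.charpoly = ∏ i, (X - C (l i))) :
    ∃ g ∈ orthogonalGroup ι ℝ, g * A * gᵀ = diagonal l := by
  have hH : A.IsHermitian := isHermitian_iff_isSymm.mpr hA
  have hroots : Finset.univ.val.map l = Finset.univ.val.map hH.eigenvalues := by
    have h := hH.roots_charpoly_eq_eigenvalues
    rwa [hl, roots_prod_univ_X_sub_C, RCLike.ofReal_real_eq_id, Function.id_comp] at h
  obtain ⟨σ, rfl⟩ := Function.exists_perm_eq_comp_of_map_univ_eq hroots
  refine ⟨σ.permMatrix ℝ * (hH.eigenvectorUnitary : Matrix ι ι ℝ)ᵀ,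
    Submonoid.mul_mem _ (permMatrix_mem_orthogonalGroup σ)
      hH.transpose_eigenvectorUnitary_mem_orthogonalGroup, ?_⟩
  rw [transpose_mul, ← permMatrix_mul_diagonal_mul_transpose,
    ← hH.transpose_eigenvectorUnitary_conj_eq_diagonal]
  simp only [Matrix.mul_assoc]

theorem exists_mem_orthogonalGroup_det_eq_neg_one_conj_diagonal [Nonempty ι] :
    ∃ r ∈ orthogonalGroup ι ℝ, r.det = -1 ∧ ∀ d : ι → ℝ, r * diagonal d * rᵀ = diagonal d := by
  obtain ⟨i₀⟩ := ‹Nonempty ι›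
  set ε : ι → ℝ := Function.update 1 i₀ (-1)
  have hε (i : ι) : ε i * ε i = 1 := by
    rcases eq_or_ne i i₀ with rfl | hi <;> simp [ε, *]
  have hconj (d : ι → ℝ) : diagonal ε * diagonal d * (diagonal ε)ᵀ = diagonal d := by
    rw [diagonal_transpose, diagonal_mul_diagonal, diagonal_mul_diagonal]
    congr 1
    funext i
    linear_combination d i * hε i
  refine ⟨diagonal ε, ?_, ?_, hconj⟩
  · rw [mem_orthogonalGroup_iff]
    simpa using hconj 1
  · simp [ε, det_diagonal, Finset.prod_update_of_mem (Finset.mem_univ i₀)]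

def specialOrthogonalOrbit (A : Matrix ι ι ℝ) : Set (Matrix ι ι ℝ) :=
  {B | ∃ g : Matrix ι ι ℝ, g * gᵀ = 1 ∧ g.det = 1 ∧ B = g * A * gᵀ}

theorem diagonal_mem_specialOrthogonalOrbit [Nonempty ι] {A g : Matrix ι ι ℝ} {d : ι → ℝ}
    (hg : g ∈ orthogonalGroup ι ℝ) (hgA : g * A * gᵀ = diagonal d) :
    diagonal d ∈ specialOrthogonalOrbit A := by
  have hdet : g.det * g.det = 1 := by
    simpa using (det_of_mem_unitary hg).2
  rcases mul_self_eq_one_iff.mp hdet with hpos | hneg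
  · exact ⟨g, (mem_orthogonalGroup_iff ι ℝ).mp hg, hpos, hgA.symm⟩
  · obtain ⟨r, hr, hrdet, hrd⟩ := exists_mem_orthogonalGroup_det_eq_neg_one_conj_diagonal (ι := ι)
    refine ⟨r * g, (mem_orthogonalGroup_iff ι ℝ).mp (Submonoid.mul_mem _ hr hg), ?_, ?_⟩
    · rw [det_mul, hrdet, hneg]
      norm_num
    · rw [← hrd d, ← hgA, transpose_mul]
      simp only [Matrix.mul_assoc]

theorem specialOrthogonalOrbit_subset_closedBall (A : Matrix ι ι ℝ) (c : ℝ) :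
    specialOrthogonalOrbit A ⊆ closedBall (c • 1) ‖A - c • 1‖ := by
  rintro _ ⟨g, hg, -, rfl⟩
  have hconj : g * A * gᵀ - c • 1 = g * (A - c • 1) * gᵀ := by
    rw [Matrix.mul_sub, Matrix.sub_mul, Matrix.mul_smul, Matrix.smul_mul, Matrix.mul_one, hg]
  rw [mem_closedBall, dist_eq_norm, hconj,
    frobenius_norm_conj_of_mem_orthogonalGroup ((mem_orthogonalGroup_iff ι ℝ).mpr hg)]

theorem diam_specialOrthogonalOrbit_le (A : Matrix ι ι ℝ) (c : ℝ) :
    diam (specialOrthogonalOrbit A) ≤ 2 * ‖A - c • 1‖ :=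
  diam_le_of_subset_closedBall (norm_nonneg _) (specialOrthogonalOrbit_subset_closedBall A c)

theorem IsSymm.abs_sub_le_diam_specialOrthogonalOrbit {A : Matrix ι ι ℝ} (hA : A.IsSymm)
    {l : ι → ℝ} (hl : A.charpoly = ∏ i, (X - C (l i))) (i j : ι) :
    |l i - l j| ≤ diam (specialOrthogonalOrbit A) := by
  have : Nonempty ι := ⟨i⟩
  have hmem (σ : Equiv.Perm ι) : diagonal (l ∘ σ) ∈ specialOrthogonalOrbit A := by
    have hlσ : A.charpoly = ∏ k, (X - C ((l ∘ σ) k)) := by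
      rw [hl, Function.comp_def, Equiv.prod_comp σ fun k => X - C (l k)]
    obtain ⟨g, hg, hgA⟩ := hA.exists_mem_orthogonalGroup_conj_eq_diagonal hlσ
    exact diagonal_mem_specialOrthogonalOrbit hg hgA
  have hbdd : Bornology.IsBounded (specialOrthogonalOrbit A) :=
    isBounded_closedBall.subset (specialOrthogonalOrbit_subset_closedBall A 0)
  calc |l i - l j| = ‖(WithLp.toLp 2 (l - l ∘ Equiv.swap i j)).ofLp i‖ := by simp
    _ ≤ ‖diagonal (l - l ∘ Equiv.swap i j)‖ := by
      rw [frobenius_norm_diagonal]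
      exact PiLp.norm_apply_le _ i
    _ = dist (diagonal (l ∘ Equiv.refl ι)) (diagonal (l ∘ Equiv.swap i j)) := by
      rw [dist_eq_norm, diagonal_sub]
      rfl
    _ ≤ diam (specialOrthogonalOrbit A) := dist_le_diam_of_mem hbdd (hmem _) (hmem _)

end Matrix

theorem orbit_diameter_bounds_general
    (n : ℕ) (A : Matrix (Fin n) (Fin n) ℝ) (hA : A.IsSymm)
    (l : Fin n → ℝ)
    (hl : A.charpoly = ∏ i, (Polynomial.X - Polynomial.C (l i)))
    (m : ℝ) :
    (∀ i j : Fin n, |l i - l j| ≤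
        Metric.diam {B : Matrix (Fin n) (Fin n) ℝ |
          ∃ g : Matrix (Fin n) (Fin n) ℝ,
            g * gᵀ = 1 ∧ g.det = 1 ∧ B = g * A * gᵀ}) ∧
    Metric.diam {B : Matrix (Fin n) (Fin n) ℝ |
        ∃ g : Matrix (Fin n) (Fin n) ℝ,
          g * gᵀ = 1 ∧ g.det = 1 ∧ B = g * A * gᵀ} ≤
      2 * ‖A - m • (1 : Matrix (Fin n) (Fin n) ℝ)‖ :=
  ⟨hA.abs_sub_le_diam_specialOrthogonalOrbit hl, diam_specialOrthogonalOrbit_le A m⟩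

/-- Bounds on the diameter (in the Frobenius metric) of the SO(n)-orbit of a
symmetric matrix with eigenvalues λ₁,…,λₙ:
max |λᵢ − λⱼ| ≤ diam ≤ 2·dist(A, line of scalar matrices). -/
theorem orbit_diameter_bounds
    (n : ℕ) (hn : 1 ≤ n) (A : Matrix (Fin n) (Fin n) ℝ) (hA : A.IsSymm)
    (l : Fin n → ℝ)
    (hl : A.charpoly = ∏ i, (Polynomial.X - Polynomial.C (l i)))
    (m : ℝ) (hm : m = (∑ i, l i) / n) :
    (∀ i j : Fin n, |l i - l j| ≤
        Metric.diam {B : Matrix (Fin n) (Fin n) ℝ |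
          ∃ g : Matrix (Fin n) (Fin n) ℝ,
            g * gᵀ = 1 ∧ g.det = 1 ∧ B = g * A * gᵀ}) ∧
    Metric.diam {B : Matrix (Fin n) (Fin n) ℝ |
        ∃ g : Matrix (Fin n) (Fin n) ℝ,
          g * gᵀ = 1 ∧ g.det = 1 ∧ B = g * A * gᵀ} ≤
      2 * ‖A - m • (1 : Matrix (Fin n) (Fin n) ℝ)‖ :=
  orbit_diameter_bounds_general n A hA l hl m
end

section
/- A real symmetric 3×3 matrix X (with entries xᵢⱼ = X i j, 1-based, x₂₁ = x₁₂ etc.) belongs to the orbit {g * diag(1,1,−2) * gᵀ : g ∈ SO(3)} if and only if the following five equations hold: x₁₁ + x₂₂ + x₃₃ = 0; x₂₃² − x₂₂x₃₃ + x₂₂ + x₃₃ − 1 = 0; x₁₃² + x₂₂x₃₃ + x₃₃² − x₂₂ − 1 = 0; x₁₂x₃₃ − x₁₃x₂₃ − x₁₂ = 0; x₁₂² + x₂₂² + x₂₂x₃₃ − x₃₃ − 1 = 0. (The orbit is an algebraically quadratic surface defined by four quadratic equations in the hyperplane of traceless matrices.) -/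
/-!
Since `diag(1, 1, -2) = 1 - 3 e₃ e₃ᵀ`, conjugating by `g ∈ SO(3)` gives `1 - 3 v vᵀ` with
`v = g e₃` a unit vector; conversely every unit vector is `g e₃` for the half-turn `g` about
`e₃ + v` (replace `v` by `-v` if `v = -e₃`). So the orbit consists of the matrices `1 - 3 v vᵀ`
with `‖v‖ = 1`, i.e. `M = 1 - X = 3 v vᵀ`. The five equations say that `M` has trace `3` and that
enough `2 × 2` minors of `M` vanish to recover `v` from a column of `M` with non-zero diagonal
entry.
-/

open Matrix

namespace Matrix

variable {n : Type*} [Fintype n]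

theorem mul_vecMulVec_mul_transpose {R : Type*} [CommRing R] (g : Matrix n n R) (u : n → R) :
    g * vecMulVec u u * gᵀ = vecMulVec (g *ᵥ u) (g *ᵥ u) := by
  rw [mul_vecMulVec, vecMulVec_mul, vecMul_transpose]

variable [DecidableEq n]

theorem mulVec_dotProduct_mulVec_self {R : Type*} [CommRing R] {g : Matrix n n R}
    (hg : gᵀ * g = 1) (u : n → R) : g *ᵥ u ⬝ᵥ g *ᵥ u = u ⬝ᵥ u := by
  rw [dotProduct_mulVec, ← mulVec_transpose, mulVec_mulVec, hg, one_mulVec]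

theorem conj_one_sub_smul_vecMulVec {R : Type*} [CommRing R] {g : Matrix n n R}
    (hg : g * gᵀ = 1) (c : R) (u : n → R) :
    g * (1 - c • vecMulVec u u) * gᵀ = 1 - c • vecMulVec (g *ᵥ u) (g *ᵥ u) := by
  rw [Matrix.mul_sub, Matrix.sub_mul, Matrix.mul_one, hg, Matrix.mul_smul, Matrix.smul_mul,
    mul_vecMulVec_mul_transpose]

/-- The witness is the half-turn `c⁻¹ (u + v)(u + v)ᵀ - 1` about the axis `u + v`,
where `c = 1 + u ⬝ᵥ v`. -/
theorem exists_orthogonal_mulVec_eq {K : Type*} [Field K] {u v : n → K}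
    (hu : u ⬝ᵥ u = 1) (hv : v ⬝ᵥ v = 1) (huv : 1 + u ⬝ᵥ v ≠ 0) :
    ∃ g : Matrix n n K, g * gᵀ = 1 ∧ g.det = -(-1) ^ Fintype.card n ∧ g *ᵥ u = v := by
  set c := 1 + u ⬝ᵥ v
  set w := u + v
  have hww : w ⬝ᵥ w = 2 * c := by
    simp only [w, c, add_dotProduct, dotProduct_add, hu, hv, dotProduct_comm v u]
    ring
  have hwu : w ⬝ᵥ u = c := by
    simp only [w, c, add_dotProduct, hu, dotProduct_comm v u]
  have hWW : vecMulVec w w * vecMulVec w w = (2 * c) • vecMulVec w w := by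
    rw [vecMulVec_mul_vecMulVec, hww, vecMulVec_smul]
  refine ⟨c⁻¹ • vecMulVec w w - 1, ?_, ?_, ?_⟩
  · have hcoeff : c⁻¹ * c⁻¹ * (2 * c) = c⁻¹ + c⁻¹ := by
      field_simp
      ring
    rw [transpose_sub, transpose_smul, transpose_vecMulVec, transpose_one, Matrix.sub_mul,
      Matrix.mul_sub, Matrix.mul_sub, smul_mul_smul, hWW, smul_smul, hcoeff, add_smul,
      Matrix.mul_one, Matrix.one_mul, Matrix.one_mul]
    abel
  · rw [← neg_sub, det_neg, sub_eq_add_neg, ← neg_smul, ← smul_vecMulVec, vecMulVec_eq Unit,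
      det_one_add_replicateCol_mul_replicateRow, dotProduct_smul, hww, smul_eq_mul, neg_mul,
      mul_left_comm, inv_mul_cancel₀ huv]
    ring
  · rw [sub_mulVec, smul_mulVec, vecMulVec_mulVec, one_mulVec, hwu, op_smul_eq_smul, smul_smul,
      inv_mul_cancel₀ huv, one_smul, add_sub_cancel_left]

end Matrix

theorem exists_ne_zero_three_mul_sq_eq {m : ℝ} (hm : 0 < m) : ∃ t : ℝ, t ≠ 0 ∧ 3 * t ^ 2 = m :=
  ⟨√(m / 3), by positivity, by rw [Real.sq_sqrt (by positivity)]; ring⟩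

theorem exists_unit_of_planar_equations {a b p : ℝ} (hab : a + b = -1)
    (hp : p ^ 2 = (1 - a) * (1 - b)) :
    ∃ x y : ℝ, x ^ 2 + y ^ 2 = 1 ∧ a = 1 - 3 * x ^ 2 ∧ b = 1 - 3 * y ^ 2 ∧
      p = -3 * (x * y) := by
  rcases eq_or_ne a 1 with rfl | ha
  · have hp0 : p = 0 := pow_eq_zero_iff two_ne_zero |>.mp (by rw [hp]; ring)
    exact ⟨0, 1, by norm_num, by norm_num, by linarith, by simp [hp0]⟩
  · have ha' : 0 < 1 - a :=
      lt_of_le_of_ne (by nlinarith [sq_nonneg p]) (sub_ne_zero.2 ha.symm).symm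
    obtain ⟨x, hx, hxa⟩ := exists_ne_zero_three_mul_sq_eq ha'
    refine ⟨x, -p / (3 * x), ?_, by linarith, ?_, by field_simp⟩
    · field_simp
      linear_combination hp + (3 * x ^ 2 + b - 1) * hxa - 3 * x ^ 2 * hab
    · field_simp
      linear_combination hp - (1 - b) * hxa

theorem exists_unit_of_orbit_equations {a b c p q r : ℝ}
    (h1 : a + b + c = 0)
    (h2 : r ^ 2 - b * c + b + c - 1 = 0)
    (h3 : q ^ 2 + b * c + c ^ 2 - b - 1 = 0)
    (h4 : p * c - q * r - p = 0)
    (h5 : p ^ 2 + b ^ 2 + b * c - c - 1 = 0) :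
    ∃ x y z : ℝ, x ^ 2 + y ^ 2 + z ^ 2 = 1 ∧ a = 1 - 3 * x ^ 2 ∧ b = 1 - 3 * y ^ 2 ∧
      c = 1 - 3 * z ^ 2 ∧ p = -3 * (x * y) ∧ q = -3 * (x * z) ∧ r = -3 * (y * z) := by
  have hp : p ^ 2 = (1 - a) * (1 - b) := by linear_combination h5 + (1 - b) * h1
  have hq : q ^ 2 = (1 - a) * (1 - c) := by linear_combination h3 + (1 - c) * h1
  have hr : r ^ 2 = (1 - b) * (1 - c) := by linear_combination h2
  rcases eq_or_ne c 1 with rfl | hc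
  · have hq0 : q = 0 := pow_eq_zero_iff two_ne_zero |>.mp (by rw [hq]; ring)
    have hr0 : r = 0 := pow_eq_zero_iff two_ne_zero |>.mp (by rw [hr]; ring)
    obtain ⟨x, y, hxy, ha, hb, hpxy⟩ := exists_unit_of_planar_equations (by linarith) hp
    exact ⟨x, y, 0, by linarith, ha, hb, by ring, hpxy, by simp [hq0], by simp [hr0]⟩
  · have hc' : 0 < 1 - c :=
      lt_of_le_of_ne (by nlinarith [sq_nonneg q, sq_nonneg r]) (sub_ne_zero.2 hc.symm).symm
    obtain ⟨z, hz, hzc⟩ := exists_ne_zero_three_mul_sq_eq hc'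
    refine ⟨-q / (3 * z), -r / (3 * z), z, ?_, ?_, ?_, by linarith, ?_, by field_simp,
      by field_simp⟩
    · field_simp
      linear_combination hq + hr + (3 * z ^ 2 + a + b - 2) * hzc - 3 * z ^ 2 * h1
    · field_simp
      linear_combination hq - (1 - a) * hzc
    · field_simp
      linear_combination hr - (1 - b) * hzc
    · field_simp
      linear_combination -h4 + p * hzc

theorem diagonal_one_one_neg_two_eq {R : Type*} [CommRing R] :
    diagonal ![(1 : R), 1, -2] = 1 - (3 : R) • vecMulVec ![0, 0, 1] ![0, 0, 1] := by
  ext i j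
  fin_cases i <;> fin_cases j <;> norm_num [vecMulVec_apply, one_apply, Fin.ext_iff]

theorem exists_conj_diagonal_iff (X : Matrix (Fin 3) (Fin 3) ℝ) :
    (∃ g : Matrix (Fin 3) (Fin 3) ℝ, g * gᵀ = 1 ∧ g.det = 1 ∧
        X = g * diagonal ![1, 1, -2] * gᵀ) ↔
      ∃ v : Fin 3 → ℝ, v ⬝ᵥ v = 1 ∧ X = 1 - (3 : ℝ) • vecMulVec v v := by
  set e : Fin 3 → ℝ := ![0, 0, 1]
  have he : e ⬝ᵥ e = 1 := by simp [e, dotProduct, Fin.sum_univ_three]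
  rw [diagonal_one_one_neg_two_eq]
  constructor
  · rintro ⟨g, hg, -, rfl⟩
    exact ⟨g *ᵥ e, by rw [mulVec_dotProduct_mulVec_self (mul_eq_one_comm.mp hg), he],
      conj_one_sub_smul_vecMulVec hg 3 e⟩
  · rintro ⟨v, hv, rfl⟩
    -- `v` and `-v` give the same matrix, and one of them is not antipodal to `e`.
    obtain ⟨w, hw, hew, hwv⟩ : ∃ w : Fin 3 → ℝ,
        w ⬝ᵥ w = 1 ∧ 1 + e ⬝ᵥ w ≠ 0 ∧ vecMulVec w w = vecMulVec v v := by
      rcases ne_or_eq (1 + e ⬝ᵥ v) 0 with hev | hev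
      · exact ⟨v, hv, hev, rfl⟩
      · refine ⟨-v, by rw [neg_dotProduct_neg, hv], ?_,
          by rw [neg_vecMulVec, vecMulVec_neg, neg_neg]⟩
        rw [dotProduct_neg]
        linarith
    obtain ⟨g, hg, hdet, hge⟩ := exists_orthogonal_mulVec_eq he hw hew
    refine ⟨g, hg, by norm_num [hdet], ?_⟩
    rw [conj_one_sub_smul_vecMulVec hg, hge, hwv]

theorem exists_unit_iff_orbit_equations {X : Matrix (Fin 3) (Fin 3) ℝ} (hX : X.IsSymm) :
    (∃ v : Fin 3 → ℝ, v ⬝ᵥ v = 1 ∧ X = 1 - (3 : ℝ) • vecMulVec v v) ↔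
      (X 0 0 + X 1 1 + X 2 2 = 0 ∧
       X 1 2 ^ 2 - X 1 1 * X 2 2 + X 1 1 + X 2 2 - 1 = 0 ∧
       X 0 2 ^ 2 + X 1 1 * X 2 2 + X 2 2 ^ 2 - X 1 1 - 1 = 0 ∧
       X 0 1 * X 2 2 - X 0 2 * X 1 2 - X 0 1 = 0 ∧
       X 0 1 ^ 2 + X 1 1 ^ 2 + X 1 1 * X 2 2 - X 2 2 - 1 = 0) := by
  constructor
  · rintro ⟨v, hv, rfl⟩
    simp only [dotProduct, Fin.sum_univ_three] at hv
    simp only [Matrix.sub_apply, Matrix.smul_apply, vecMulVec_apply, smul_eq_mul, one_apply_eq,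
      one_apply_ne (show (0 : Fin 3) ≠ 1 by decide), one_apply_ne (show (0 : Fin 3) ≠ 2 by decide),
      one_apply_ne (show (1 : Fin 3) ≠ 2 by decide)]
    exact ⟨by linear_combination -3 * hv, by ring, by linear_combination 9 * v 2 ^ 2 * hv, by ring,
      by linear_combination 9 * v 1 ^ 2 * hv⟩
  · rintro ⟨h1, h2, h3, h4, h5⟩
    obtain ⟨x, y, z, hxyz, ha, hb, hc, hp, hq, hr⟩ :=
      exists_unit_of_orbit_equations h1 h2 h3 h4 h5
    refine ⟨![x, y, z], by simp [dotProduct, Fin.sum_univ_three]; linarith, ?_⟩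
    ext i j
    fin_cases i <;> fin_cases j <;>
      simp [one_apply, hX.apply 0 1, hX.apply 0 2, hX.apply 1 2, ha, hb, hc, hp, hq, hr] <;> ring

/-- The orbit of diag(1,1,−2) is the quadratic surface cut out by the trace
condition and four quadratic equations in the matrix entries. -/
theorem orbit_quadratic_equations
    (X : Matrix (Fin 3) (Fin 3) ℝ) (hX : X.IsSymm) :
    (∃ g : Matrix (Fin 3) (Fin 3) ℝ,
        g * gᵀ = 1 ∧ g.det = 1 ∧
        X = g * Matrix.diagonal ![1, 1, -2] * gᵀ) ↔
      (X 0 0 + X 1 1 + X 2 2 = 0 ∧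
       X 1 2 ^ 2 - X 1 1 * X 2 2 + X 1 1 + X 2 2 - 1 = 0 ∧
       X 0 2 ^ 2 + X 1 1 * X 2 2 + X 2 2 ^ 2 - X 1 1 - 1 = 0 ∧
       X 0 1 * X 2 2 - X 0 2 * X 1 2 - X 0 1 = 0 ∧
       X 0 1 ^ 2 + X 1 1 ^ 2 + X 1 1 * X 2 2 - X 2 2 - 1 = 0) := by
  rw [exists_conj_diagonal_iff, exists_unit_iff_orbit_equations hX]
end

section
/- A real symmetric 3×3 matrix X (with entries xᵢⱼ = X i j, 1-based, x₂₁ = x₁₂ etc.) has a multiple eigenvalue if and only if the following five cubic forms all vanish at X: (1) x₁₂²x₂₃ − x₁₂x₁₃x₂₂ + x₁₂x₁₃x₃₃ − x₁₃²x₂₃; (2) x₁₂x₂₃x₁₁ − x₁₂x₂₃x₂₂ − x₁₃³ + x₁₃x₂₃² − x₁₃x₁₁x₂₂ + x₁₃x₁₁x₃₃ + x₁₃x₂₂² − x₁₃x₂₂x₃₃; (3) x₁₂x₁₃x₁₁ − x₁₂x₁₃x₂₂ − x₁₃²x₂₃ + x₂₃³ − x₂₃x₁₁² + x₂₃x₁₁x₂₂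 + x₂₃x₁₁x₃₃ − x₂₃x₂₂x₃₃; (4) x₁₂²x₁₁ − x₁₂²x₂₂ − x₁₃²x₁₁ + x₁₃²x₃₃ + x₂₃²x₂₂ − x₂₃²x₃₃ − x₁₁²x₂₂ + x₁₁²x₃₃ + x₁₁x₂₂² − x₁₁x₃₃² − x₂₂²x₃₃ + x₂₂x₃₃²; (5) x₁₂³ − x₁₂x₂₃² − x₁₂x₁₁x₂₂ + x₁₂x₁₁x₃₃ + x₁₂x₂₂x₃₃ − x₁₂x₃₃² − x₁₃x₂₃x₁₁ + x₁₃x₂₃x₃₃. (These five cubic forms are a defining system for the discriminant surface M in Sym(3).) -/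
/-!
If `λ` is a double eigenvalue of `X` and `μ` the remaining one, Cayley–Hamilton gives
`(X - λ)²(X - μ) = 0`, and since `X - λ` is symmetric this already forces
`(X - λ)(X - μ) = 0`.
The five cubics are linear combinations, with coefficients linear in the entries, of the six
entries of this quadratic relation. Conversely, an explicit certificate puts the discriminant of
the characteristic polynomial in the ideal of the five cubics, and a split cubic with vanishing
discriminant has a repeated root.
-/

open Matrix

section

open Polynomial

theorem Polynomial.Monic.exists_eq_sq_mul_X_sub_C {R : Type*} [CommRing R] [Nontrivial R]
    {p : R[X]} (hp : p.Monic) (hdeg : p.natDegree = 3) {c : R} (hc : (X - C c) ^ 2 ∣ p) :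
    ∃ d, p = (X - C c) ^ 2 * (X - C d) := by
  obtain ⟨q, rfl⟩ := hc
  have hsq : ((X - C c) ^ 2).Monic := (monic_X_sub_C c).pow 2
  have hq : q.Monic := hsq.of_mul_monic_left hp
  have hq1 : q.natDegree = 1 := by
    rw [hsq.natDegree_mul hq, (monic_X_sub_C c).natDegree_pow, natDegree_X_sub_C] at hdeg
    omega
  refine ⟨-q.coeff 0, ?_⟩
  rw [map_neg, sub_neg_eq_add, ← hq.eq_X_add_C hq1]

theorem Cubic.exists_sq_dvd_toPoly_of_discr_eq_zero {F : Type*} [Field F] {P : Cubic F}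
    (ha : P.a ≠ 0) (hP : P.toPoly.Splits) (hdiscr : P.discr = 0) :
    ∃ c, (X - C c) ^ 2 ∣ P.toPoly := by
  obtain ⟨x, y, z, hroots⟩ :=
    (Cubic.splits_iff_roots_eq_three (φ := RingHom.id F) ha).mp (by rwa [Polynomial.map_id])
  have hfac := Cubic.eq_prod_three_roots ha hroots
  rw [Cubic.map_toPoly, Polynomial.map_id, RingHom.id_apply] at hfac
  have hrep : x = y ∨ x = z ∨ y = z := by
    by_contra! h
    exact (Cubic.discr_ne_zero_iff_roots_ne ha hroots).mpr h hdiscr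
  rw [hfac]
  rcases hrep with rfl | rfl | rfl
  · exact ⟨x, C P.a * (X - C z), by ring⟩
  · exact ⟨x, C P.a * (X - C y), by ring⟩
  · exact ⟨y, C P.a * (X - C x), by ring⟩

theorem Matrix.IsHermitian.mul_eq_zero_of_sq_mul_eq_zero {R m n : Type*} [Fintype n]
    [DecidableEq n] [CommRing R] [PartialOrder R] [StarRing R] [StarOrderedRing R]
    [NoZeroDivisors R] {A : Matrix n n R} {B : Matrix n m R} (hA : A.IsHermitian)
    (h : A ^ 2 * B = 0) : A * B = 0 := by
  rwa [← conjTranspose_mul_self_mul_eq_zero, hA.eq, ← sq]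

theorem Matrix.IsSymm.sub_smul_one_mul_eq_zero_of_charpoly_eq {n : Type*} [Fintype n]
    [DecidableEq n] {A : Matrix n n ℝ} (hA : A.IsSymm) {c d : ℝ}
    (h : A.charpoly = (X - C c) ^ 2 * (X - C d)) : (A - c • 1) * (A - d • 1) = 0 := by
  have hCH := aeval_self_charpoly A
  rw [h] at hCH
  simp only [map_mul, map_pow, map_sub, aeval_X, aeval_C, Algebra.algebraMap_eq_smul_one] at hCH
  exact IsHermitian.mul_eq_zero_of_sq_mul_eq_zero
    (isHermitian_iff_isSymm.mpr (hA.sub (isSymm_one.smul c))) hCH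

namespace Matrix

variable {R : Type*} [CommRing R]

def charCubic (A : Matrix (Fin 3) (Fin 3) R) : Cubic R :=
  ⟨1, -A.trace,
    A 0 0 * A 1 1 - A 0 1 * A 1 0 + A 0 0 * A 2 2 - A 0 2 * A 2 0
      + A 1 1 * A 2 2 - A 1 2 * A 2 1,
    -A.det⟩

theorem toPoly_charCubic (A : Matrix (Fin 3) (Fin 3) R) : A.charCubic.toPoly = A.charpoly := by
  rw [charpoly, det_fin_three]
  simp only [charCubic, Cubic.toPoly, trace_fin_three, det_fin_three, charmatrix_apply,
    diagonal_apply, Fin.isValue, Fin.reduceEq, if_true, if_false, zero_sub, map_neg,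
    map_add, map_sub, map_mul, map_one, one_mul]
  ring

def DiscCubicsVanish (X : Matrix (Fin 3) (Fin 3) R) : Prop :=
  X 0 1 ^ 2 * X 1 2 - X 0 1 * X 0 2 * X 1 1 + X 0 1 * X 0 2 * X 2 2
      - X 0 2 ^ 2 * X 1 2 = 0 ∧
  X 0 1 * X 1 2 * X 0 0 - X 0 1 * X 1 2 * X 1 1 - X 0 2 ^ 3
      + X 0 2 * X 1 2 ^ 2 - X 0 2 * X 0 0 * X 1 1 + X 0 2 * X 0 0 * X 2 2
      + X 0 2 * X 1 1 ^ 2 - X 0 2 * X 1 1 * X 2 2 = 0 ∧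
  X 0 1 * X 0 2 * X 0 0 - X 0 1 * X 0 2 * X 1 1 - X 0 2 ^ 2 * X 1 2
      + X 1 2 ^ 3 - X 1 2 * X 0 0 ^ 2 + X 1 2 * X 0 0 * X 1 1
      + X 1 2 * X 0 0 * X 2 2 - X 1 2 * X 1 1 * X 2 2 = 0 ∧
  X 0 1 ^ 2 * X 0 0 - X 0 1 ^ 2 * X 1 1 - X 0 2 ^ 2 * X 0 0
      + X 0 2 ^ 2 * X 2 2 + X 1 2 ^ 2 * X 1 1 - X 1 2 ^ 2 * X 2 2
      - X 0 0 ^ 2 * X 1 1 + X 0 0 ^ 2 * X 2 2 + X 0 0 * X 1 1 ^ 2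
      - X 0 0 * X 2 2 ^ 2 - X 1 1 ^ 2 * X 2 2 + X 1 1 * X 2 2 ^ 2 = 0 ∧
  X 0 1 ^ 3 - X 0 1 * X 1 2 ^ 2 - X 0 1 * X 0 0 * X 1 1
      + X 0 1 * X 0 0 * X 2 2 + X 0 1 * X 1 1 * X 2 2 - X 0 1 * X 2 2 ^ 2
      - X 0 2 * X 1 2 * X 0 0 + X 0 2 * X 1 2 * X 2 2 = 0

theorem IsSymm.discCubicsVanish_of_sub_smul_one_mul_eq_zero {X : Matrix (Fin 3) (Fin 3) R}
    (hX : X.IsSymm) {c d : R} (h : (X - c • 1) * (X - d • 1) = 0) : X.DiscCubicsVanish := by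
  have e00 := congrFun₂ h 0 0
  have e01 := congrFun₂ h 0 1
  have e02 := congrFun₂ h 0 2
  have e11 := congrFun₂ h 1 1
  have e12 := congrFun₂ h 1 2
  have e22 := congrFun₂ h 2 2
  simp only [mul_apply, Fin.sum_univ_three, sub_apply, smul_apply, one_apply, smul_eq_mul,
    mul_ite, mul_one, mul_zero, Fin.isValue, Fin.reduceEq, if_true, if_false, sub_zero, zero_apply,
    hX.apply 0 1, hX.apply 0 2, hX.apply 1 2] at e00 e01 e02 e11 e12 e22
  refine ⟨?_, ?_, ?_, ?_, ?_⟩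
  · linear_combination X 1 2 * e11 - X 1 2 * e22 - (X 1 1 - X 2 2) * e12
  · linear_combination -X 0 2 * e00 + X 0 2 * e11 + (X 0 0 - X 1 1) * e02
  · linear_combination -X 1 2 * e00 + X 1 2 * e11 + (X 0 0 - X 1 1) * e12
  · linear_combination (X 2 2 - X 1 1) * e00 + (X 0 0 - X 2 2) * e11 - (X 0 0 - X 1 1) * e22
  · linear_combination X 0 1 * e00 - X 0 1 * e22 - (X 0 0 - X 2 2) * e01

theorem IsSymm.charCubic_discr_eq_zero {X : Matrix (Fin 3) (Fin 3) R} (hX : X.IsSymm)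
    (h : X.DiscCubicsVanish) : X.charCubic.discr = 0 := by
  obtain ⟨h1, h2, h3, h4, h5⟩ := h
  simp only [Cubic.discr, charCubic, trace_fin_three, det_fin_three, hX.apply 0 1, hX.apply 0 2,
    hX.apply 1 2]
  linear_combination
    (40*(X 1 2)*(X 0 1)^2 - 44*(X 1 2)*(X 0 2)^2 + 12*(X 1 2)^3
      + 28*(X 2 2)*(X 0 2)*(X 0 1) - 4*(X 2 2)^2*(X 1 2)
      - 32*(X 1 1)*(X 0 2)*(X 0 1) - 24*(X 1 1)*(X 2 2)*(X 1 2)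
      + 11*(X 1 1)^2*(X 1 2) + 4*(X 0 0)*(X 0 2)*(X 0 1)
      + 32*(X 0 0)*(X 2 2)*(X 1 2) + 2*(X 0 0)*(X 1 1)*(X 1 2)
      - 17*(X 0 0)^2*(X 1 2)) * h1
    + (-12*(X 0 2)*(X 0 1)^2 - 4*(X 0 2)^3 + 28*(X 1 2)^2*(X 0 2)
      - 21*(X 2 2)*(X 1 2)*(X 0 1) - (X 2 2)^2*(X 0 2)
      + 8*(X 1 1)*(X 1 2)*(X 0 1) - 4*(X 1 1)*(X 2 2)*(X 0 2)
      + 4*(X 1 1)^2*(X 0 2) + 13*(X 0 0)*(X 1 2)*(X 0 1)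
      + 6*(X 0 0)*(X 2 2)*(X 0 2) - 4*(X 0 0)*(X 1 1)*(X 0 2)
      - (X 0 0)^2*(X 0 2)) * h2
    + (-24*(X 1 2)*(X 0 1)^2 + 4*(X 1 2)^3 - 3*(X 2 2)*(X 0 2)*(X 0 1)
      + (X 2 2)^2*(X 1 2) - 6*(X 1 1)*(X 2 2)*(X 1 2) + (X 1 1)^2*(X 1 2)
      + 3*(X 0 0)*(X 0 2)*(X 0 1) + 4*(X 0 0)*(X 2 2)*(X 1 2)
      + 4*(X 0 0)*(X 1 1)*(X 1 2) - 4*(X 0 0)^2*(X 1 2)) * h3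
    + (4*(X 2 2)*(X 0 1)^2 - 5*(X 1 1)*(X 0 1)^2 + (X 1 1)*(X 2 2)^2
      - (X 1 1)^2*(X 2 2) + (X 0 0)*(X 0 1)^2 - (X 0 0)*(X 2 2)^2
      + (X 0 0)*(X 1 1)^2 + (X 0 0)^2*(X 2 2) - (X 0 0)^2*(X 1 1)) * h4
    + (4*(X 0 1)^3 + 12*(X 0 2)^2*(X 0 1) - 24*(X 1 2)^2*(X 0 1)
      - 4*(X 2 2)^2*(X 0 1) + 8*(X 1 1)*(X 2 2)*(X 0 1)
      - 4*(X 1 1)^2*(X 0 1)) * h5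

end Matrix

end

/-- A real symmetric 3×3 matrix has a multiple eigenvalue iff the five cubic
forms of the minimal defining system for the discriminant surface vanish. -/
theorem discSurface_cubic_equations
    (X : Matrix (Fin 3) (Fin 3) ℝ) (hX : X.IsSymm) :
    (∃ c : ℝ, (Polynomial.X - Polynomial.C c) ^ 2 ∣ X.charpoly) ↔
      (X 0 1 ^ 2 * X 1 2 - X 0 1 * X 0 2 * X 1 1 + X 0 1 * X 0 2 * X 2 2
          - X 0 2 ^ 2 * X 1 2 = 0 ∧
       X 0 1 * X 1 2 * X 0 0 - X 0 1 * X 1 2 * X 1 1 - X 0 2 ^ 3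
          + X 0 2 * X 1 2 ^ 2 - X 0 2 * X 0 0 * X 1 1 + X 0 2 * X 0 0 * X 2 2
          + X 0 2 * X 1 1 ^ 2 - X 0 2 * X 1 1 * X 2 2 = 0 ∧
       X 0 1 * X 0 2 * X 0 0 - X 0 1 * X 0 2 * X 1 1 - X 0 2 ^ 2 * X 1 2
          + X 1 2 ^ 3 - X 1 2 * X 0 0 ^ 2 + X 1 2 * X 0 0 * X 1 1
          + X 1 2 * X 0 0 * X 2 2 - X 1 2 * X 1 1 * X 2 2 = 0 ∧
       X 0 1 ^ 2 * X 0 0 - X 0 1 ^ 2 * X 1 1 - X 0 2 ^ 2 * X 0 0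
          + X 0 2 ^ 2 * X 2 2 + X 1 2 ^ 2 * X 1 1 - X 1 2 ^ 2 * X 2 2
          - X 0 0 ^ 2 * X 1 1 + X 0 0 ^ 2 * X 2 2 + X 0 0 * X 1 1 ^ 2
          - X 0 0 * X 2 2 ^ 2 - X 1 1 ^ 2 * X 2 2 + X 1 1 * X 2 2 ^ 2 = 0 ∧
       X 0 1 ^ 3 - X 0 1 * X 1 2 ^ 2 - X 0 1 * X 0 0 * X 1 1
          + X 0 1 * X 0 0 * X 2 2 + X 0 1 * X 1 1 * X 2 2 - X 0 1 * X 2 2 ^ 2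
          - X 0 2 * X 1 2 * X 0 0 + X 0 2 * X 1 2 * X 2 2 = 0) := by
  change _ ↔ X.DiscCubicsVanish
  constructor
  · rintro ⟨c, hc⟩
    obtain ⟨d, hd⟩ := X.charpoly_monic.exists_eq_sq_mul_X_sub_C
      (by rw [charpoly_natDegree_eq_dim, Fintype.card_fin]) hc
    exact hX.discCubicsVanish_of_sub_smul_one_mul_eq_zero
      (hX.sub_smul_one_mul_eq_zero_of_charpoly_eq hd)
  · intro h
    rw [← X.toPoly_charCubic]
    exact Cubic.exists_sq_dvd_toPoly_of_discr_eq_zero one_ne_zero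
      (X.toPoly_charCubic ▸ (isHermitian_iff_isSymm.mpr hX : X.IsHermitian).splits_charpoly)
      (hX.charCubic_discr_eq_zero h)
end

section
/- Let p be a real polynomial in the six variables x₁₁, x₂₂, x₃₃, x₁₂, x₁₃, x₂₃ of total degree at most 2 such that p vanishes at (A 1 1, A 2 2, A 3 3, A 1 2, A 1 3, A 2 3) for every real symmetric 3×3 matrix A having a multiple eigenvalue. Then p = 0. (There is no nonzero polynomial of total degree less than three vanishing on the discriminant surface M; M is essentially non-quadratic.) -/
/-!
Every real symmetric matrix is `U diag(d) Uᵀ` with `U` orthogonal, and it lies in `M` as soon as two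
entries of `d` coincide. For fixed `U`, `g d := p (U diag(d) Uᵀ)` has degree at most two along every
line and vanishes on the three planes `dᵢ = dⱼ`. The line through `d` in direction `eᵢ - eⱼ` meets
these planes in three distinct points unless `dᵢ + dⱼ = 2 dₖ`, so `g d = 0`; if this fails for both
`(i, j, k) = (0, 1, 2)` and `(1, 2, 0)`, then `d₀ = d₂`. Hence `p` vanishes on all of `Sym(3) ≅ ℝ⁶`.
-/

open Matrix

open Polynomial in
theorem MvPolynomial.natDegree_aeval_le {σ R : Type*} [CommSemiring R] (p : MvPolynomial σ R)
    (g : σ → R[X]) {n : ℕ} (hg : ∀ i, (g i).natDegree ≤ n) :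
    (aeval g p).natDegree ≤ p.totalDegree * n := by
  conv_lhs => rw [p.as_sum, map_sum]
  refine natDegree_sum_le_of_forall_le _ _ fun m hm => ?_
  rw [aeval_monomial, Polynomial.algebraMap_eq, Finsupp.prod]
  calc (Polynomial.C (coeff m p) * ∏ i ∈ m.support, g i ^ m i).natDegree
      ≤ ∑ i ∈ m.support, (g i ^ m i).natDegree :=
        (natDegree_C_mul_le _ _).trans (natDegree_prod_le _ _)
    _ ≤ ∑ i ∈ m.support, m i * n := Finset.sum_le_sum fun i _ => natDegree_pow_le_of_le _ (hg i)
    _ = (m.sum fun _ e => e) * n := by rw [Finsupp.sum, Finset.sum_mul]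
    _ ≤ p.totalDegree * n := Nat.mul_le_mul_right _ (le_totalDegree hm)

open Polynomial in
theorem MvPolynomial.eval_aeval {σ R : Type*} [CommSemiring R] (p : MvPolynomial σ R)
    (g : σ → R[X]) (t : R) : (aeval g p).eval t = eval (fun i => (g i).eval t) p := by
  rw [aeval_def, ← coe_evalRingHom, eval₂_comp_left]
  congr 1; ext; simp

open Polynomial in
def DegreeLEOnLines {K V : Type*} [CommRing K] [AddCommGroup V] [Module K V]
    (d : ℕ) (f : V → K) : Prop :=
  ∀ x y : V, ∃ P : K[X], P.natDegree ≤ d ∧ ∀ t : K, f (x + t • y) = P.eval t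

theorem MvPolynomial.degreeLEOnLines_eval {σ K : Type*} [CommRing K] {p : MvPolynomial σ K}
    {d : ℕ} (hp : p.totalDegree ≤ d) : DegreeLEOnLines d fun x => eval x p := fun x y => by
  refine ⟨aeval (fun i => Polynomial.C (y i) * Polynomial.X + Polynomial.C (x i)) p,
    (natDegree_aeval_le p _ fun _ => Polynomial.natDegree_linear_le).trans (by simpa using hp),
    fun t => by rw [eval_aeval]; congr 1; ext; simp; ring⟩

namespace DegreeLEOnLines

section

variable {K V W : Type*} [CommRing K] [AddCommGroup V] [Module K V] [AddCommGroup W] [Module K W]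
  {d : ℕ} {f : V → K}

theorem comp_linearMap (hf : DegreeLEOnLines d f) (L : W →ₗ[K] V) :
    DegreeLEOnLines d (f ∘ L) := fun x y => by
  obtain ⟨P, hPd, hPf⟩ := hf (L x) (L y)
  exact ⟨P, hPd, fun t => by simp [hPf]⟩

theorem apply_eq_zero [IsDomain K] (hf : DegreeLEOnLines d f) (x y : V) (s : Finset K)
    (hs : d < s.card) (hzero : ∀ t ∈ s, f (x + t • y) = 0) : f x = 0 := by
  obtain ⟨P, hPd, hPf⟩ := hf x y
  have hP : P = 0 := P.eq_zero_of_natDegree_lt_card_of_eval_eq_zero' s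
    (fun t ht => (hPf t).symm.trans (hzero t ht)) (hPd.trans_lt hs)
  simpa [hP] using hPf 0

end

section

open Finset

variable {K : Type*} [Field K] [CharZero K] {g : (Fin 3 → K) → K}

theorem apply_eq_zero_of_add_ne_two_mul (hg : DegreeLEOnLines 2 g)
    (hvan : ∀ d, ¬ Function.Injective d → g d = 0) {i j k : Fin 3} (hij : i ≠ j) (hik : i ≠ k)
    (hjk : j ≠ k) {d : Fin 3 → K} (hd : d i + d j ≠ 2 * d k) : g d = 0 := by
  classical
  -- the parameters `t` at which entries `i, j`, resp. `i, k`, resp. `j, k` of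
  -- `d + t • (eᵢ - eⱼ)` agree
  have hcard : #{(d j - d i) / 2, d k - d i, d j - d k} = 3 :=
    card_eq_three.2 ⟨_, _, _, fun h => hd (by linear_combination 2 * h),
      fun h => hd (by linear_combination -2 * h), fun h => hd (by linear_combination -h), rfl⟩
  refine hg.apply_eq_zero d (Pi.single i 1 - Pi.single j 1) {(d j - d i) / 2, d k - d i, d j - d k}
    (by rw [hcard]; norm_num) ?_
  simp only [mem_insert, mem_singleton]
  rintro t (rfl | rfl | rfl) <;> apply hvan <;> intro hinj
  · exact hij (hinj (by simp [hij, hij.symm]; ring))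
  · exact hik (hinj (by simp [hij, hik.symm, hjk.symm]))
  · exact hjk (hinj (by simp [hij.symm, hik.symm, hjk.symm]))

theorem eq_zero_of_forall_not_injective (hg : DegreeLEOnLines 2 g)
    (hvan : ∀ d, ¬ Function.Injective d → g d = 0) (d : Fin 3 → K) : g d = 0 := by
  by_cases h₀ : d 0 + d 1 = 2 * d 2
  · by_cases h₁ : d 1 + d 2 = 2 * d 0
    · refine hvan d fun hinj => absurd (hinj ?_) (by decide : (0 : Fin 3) ≠ 2)
      exact mul_left_cancel₀ (three_ne_zero (α := K)) (by linear_combination h₀ - h₁)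
    · exact hg.apply_eq_zero_of_add_ne_two_mul hvan (by decide) (by decide) (by decide) h₁
  · exact hg.apply_eq_zero_of_add_ne_two_mul hvan (by decide) (by decide) (by decide) h₀

end

end DegreeLEOnLines

def symmCoords (R : Type*) [CommSemiring R] : Matrix (Fin 3) (Fin 3) R →ₗ[R] Fin 6 → R where
  toFun A := ![A 0 0, A 1 1, A 2 2, A 0 1, A 0 2, A 1 2]
  map_add' A B := by ext i; fin_cases i <;> rfl
  map_smul' c A := by ext i; fin_cases i <;> rfl

open Polynomial in
theorem Polynomial.exists_sq_dvd_prod_X_sub_C {ι R : Type*} [Fintype ι] [CommRing R]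
    {d : ι → R} (hd : ¬ Function.Injective d) : ∃ c, (X - C c) ^ 2 ∣ ∏ i, (X - C (d i)) := by
  classical
  obtain ⟨i, j, hdij, hij⟩ := Function.not_injective_iff.1 hd
  refine ⟨d i, ?_⟩
  rw [← Finset.mul_prod_erase _ _ (Finset.mem_univ i), sq]
  exact mul_dvd_mul_left _ (hdij ▸ Finset.dvd_prod_of_mem _ (by simpa using hij.symm))

namespace Matrix

variable {n R : Type*} [Fintype n] [DecidableEq n] [CommRing R] [StarRing R]

theorem charpoly_conjStarAlgAut (U : unitary (Matrix n n R)) (A : Matrix n n R) :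
    (Unitary.conjStarAlgAut R _ U A).charpoly = A.charpoly := by
  rw [Unitary.conjStarAlgAut_apply, charpoly_mul_comm, ← mul_assoc]
  simp

open Polynomial in
theorem exists_sq_dvd_charpoly_conjStarAlgAut_diagonal (U : unitary (Matrix n n R)) {d : n → R}
    (hd : ¬ Function.Injective d) :
    ∃ c, (X - C c) ^ 2 ∣ (Unitary.conjStarAlgAut R _ U (diagonal d)).charpoly := by
  rw [charpoly_conjStarAlgAut, charpoly_diagonal]
  exact exists_sq_dvd_prod_X_sub_C hd

theorem isSymm_conjStarAlgAut_diagonal [TrivialStar R] (U : unitary (Matrix n n R)) (d : n → R) :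
    (Unitary.conjStarAlgAut R _ U (diagonal d)).IsSymm :=
  isHermitian_iff_isSymm.1 <| isHermitian_iff_isSelfAdjoint.2 <|
    (isHermitian_iff_isSelfAdjoint.1 (isHermitian_diagonal d)).map _

end Matrix

/-- No nonzero polynomial of total degree at most two in the six entry
coordinates vanishes on the discriminant surface: M is essentially
non-quadratic. -/
theorem no_quadratic_vanishing_on_discSurface
    (p : MvPolynomial (Fin 6) ℝ) (hdeg : p.totalDegree ≤ 2)
    (hvan : ∀ A : Matrix (Fin 3) (Fin 3) ℝ, A.IsSymm →
      (∃ c : ℝ, (Polynomial.X - Polynomial.C c) ^ 2 ∣ A.charpoly) →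
      MvPolynomial.eval
        ![A 0 0, A 1 1, A 2 2, A 0 1, A 0 2, A 1 2] p = 0) :
    p = 0 := by
  refine MvPolynomial.funext fun x => ?_
  let A : Matrix (Fin 3) (Fin 3) ℝ := !![x 0, x 3, x 4; x 3, x 1, x 5; x 4, x 5, x 2]
  have hA : A.IsHermitian := by ext i j; fin_cases i <;> fin_cases j <;> rfl
  let σ := Unitary.conjStarAlgAut ℝ _ hA.eigenvectorUnitary
  let g : (Fin 3 → ℝ) → ℝ := fun d => MvPolynomial.eval (symmCoords ℝ (σ (diagonal d))) p
  have hg : DegreeLEOnLines 2 g := (MvPolynomial.degreeLEOnLines_eval hdeg).comp_linearMap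
    (symmCoords ℝ ∘ₗ σ.toAlgEquiv.toLinearMap ∘ₗ diagonalLinearMap _ ℝ ℝ)
  have hgM (d : Fin 3 → ℝ) (hd : ¬ Function.Injective d) : g d = 0 :=
    hvan _ (isSymm_conjStarAlgAut_diagonal _ d) (exists_sq_dvd_charpoly_conjStarAlgAut_diagonal _ hd)
  have hx : symmCoords ℝ (σ (diagonal hA.eigenvalues)) = x := by
    rw [← Function.id_comp hA.eigenvalues, ← RCLike.ofReal_real_eq_id, ← hA.spectral_theorem]
    ext i; fin_cases i <;> rfl
  rw [map_zero, ← hx]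
  exact hg.eq_zero_of_forall_not_injective hgM _
end

section
/- Consider the four real symmetric 3×3 matrices D = diag(1,1,−2), D₂ = diag(1,−2,1), M1 = [[1,0,0],[0,−1/2,−3/2],[0,−3/2,−1/2]] and M2 = [[−1/2,0,−3/2],[0,1,0],[−3/2,0,−1/2]]. Then: (a) these four matrices are linearly independent over ℝ; (b) for every real number t, each of the matrices t•D, t•D₂, t•M1, t•M2 has trace zero and a multiple eigenvalue, i.e. the four lines through zero spanned by them lie entirely in M₀. (This is the key fact showing that zero is a singular point of the cone M₀: a neighborhood of a regular point of the 3-dimensional surface M₀ could not contain four lines with linearly independent directions.) -/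
/-!
Each of the four matrices is `1 + u vᵀ` with `u ⬝ᵥ v = -3` (indeed `1 - 3 P` for the orthogonal
projection `P` onto a coordinate line or onto the span of `e₁ + e₂`, `e₀ + e₂`). Since the
rank-one matrix `u vᵀ` has characteristic polynomial `X³ - (u ⬝ᵥ v) X²`, the matrix
`t • (1 + u vᵀ) = t • 1 + (t • u) vᵀ` has characteristic polynomial `(X - t)² (X - t - t (u ⬝ᵥ v))`
and trace `t (3 + u ⬝ᵥ v) = 0`. Linear independence is read off the entries `(1,2)`, `(0,2)`,
`(0,0)` and `(1,1)`.
-/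

open Matrix Polynomial

namespace Matrix

variable {n R : Type*} [Fintype n] [DecidableEq n] [CommRing R]

theorem charpoly_scalar_add_vecMulVec (μ : R) (u v : n → R) :
    (scalar n μ + vecMulVec u v).charpoly =
      (X - C μ) ^ Fintype.card n - (u ⬝ᵥ v) • (X - C μ) ^ (Fintype.card n - 1) := by
  have h := charpoly_sub_scalar (vecMulVec u v) (-μ)
  rw [map_neg, sub_neg_eq_add, add_comm] at h
  rw [h, charpoly_vecMulVec, sub_comp, smul_comp, X_pow_comp, X_pow_comp, map_neg, ← sub_eq_add_neg]

theorem pow_card_sub_one_dvd_charpoly_scalar_add_vecMulVec (μ : R) (u v : n → R) :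
    (X - C μ) ^ (Fintype.card n - 1) ∣ (scalar n μ + vecMulVec u v).charpoly := by
  rw [charpoly_scalar_add_vecMulVec]
  exact dvd_sub (pow_dvd_pow _ (Nat.sub_le _ 1)) (dvd_smul_of_dvd _ dvd_rfl)

theorem smul_one_add_vecMulVec (t : R) (u v : n → R) :
    t • (1 + vecMulVec u v) = scalar n t + vecMulVec (t • u) v := by
  rw [smul_add, smul_vecMulVec, smul_one_eq_diagonal, scalar_apply]

theorem trace_smul_one_add_vecMulVec (t : R) (u v : n → R)
    (huv : u ⬝ᵥ v = -Fintype.card n) : (t • (1 + vecMulVec u v)).trace = 0 := by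
  rw [trace_smul, trace_add, trace_one, trace_vecMulVec, huv, add_neg_cancel, smul_zero]

end Matrix

/-- Four linearly independent directions spanning lines through zero that lie
entirely in the trace-zero discriminant surface M₀ (the key fact showing that
zero is a singular point of the cone M₀). -/
theorem four_independent_lines_in_M0 :
    LinearIndependent ℝ
      ![(Matrix.diagonal ![1, 1, -2] : Matrix (Fin 3) (Fin 3) ℝ),
        Matrix.diagonal ![1, -2, 1],
        !![1, 0, 0; 0, -1/2, -3/2; 0, -3/2, -1/2],
        !![-1/2, 0, -3/2; 0, 1, 0; -3/2, 0, -1/2]] ∧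
    ∀ t : ℝ,
      ∀ B ∈ ({Matrix.diagonal ![1, 1, -2],
              Matrix.diagonal ![1, -2, 1],
              !![1, 0, 0; 0, -1/2, -3/2; 0, -3/2, -1/2],
              !![-1/2, 0, -3/2; 0, 1, 0; -3/2, 0, -1/2]} :
             Set (Matrix (Fin 3) (Fin 3) ℝ)),
        (t • B).trace = 0 ∧
        ∃ c : ℝ, (Polynomial.X - Polynomial.C c) ^ 2 ∣ (t • B).charpoly := by
  refine ⟨?_, fun t B hB => ?_⟩
  · refine Fintype.linearIndependent_iff.mpr fun g hg => ?_
    have entry (i j : Fin 3) := congrFun₂ hg i j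
    simp only [Fin.sum_univ_four] at entry
    have h2 : g 2 = 0 := by simpa using entry 1 2
    have h3 : g 3 = 0 := by simpa using entry 0 2
    have h00 : g 0 + g 1 = 0 := by simpa [h2, h3] using entry 0 0
    have h11 : g 0 - g 1 * 2 = 0 := by simpa [h2, h3, sub_eq_add_neg] using entry 1 1
    have h0 : g 0 = 0 := by linarith
    have h1 : g 1 = 0 := by linarith
    intro i
    match i with
    | 0 => exact h0
    | 1 => exact h1
    | 2 => exact h2
    | 3 => exact h3
  · obtain ⟨u, v, huv, rfl⟩ :
        ∃ u v : Fin 3 → ℝ, u ⬝ᵥ v = -3 ∧ B = 1 + vecMulVec u v := by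
      rcases hB with rfl | rfl | rfl | rfl
      on_goal 1 => use ![0, 0, 1], ![0, 0, -3]
      on_goal 2 => use ![0, 1, 0], ![0, -3, 0]
      on_goal 3 => use ![0, 1, 1], ![0, -3/2, -3/2]
      on_goal 4 => use ![1, 0, 1], ![-3/2, 0, -3/2]
      all_goals
        refine ⟨by norm_num, ?_⟩
        ext i j
        fin_cases i <;> fin_cases j <;> norm_num [vecMulVec_apply]
    refine ⟨trace_smul_one_add_vecMulVec t u v (by simpa using huv), t, ?_⟩
    rw [smul_one_add_vecMulVec]
    exact pow_card_sub_one_dvd_charpoly_scalar_add_vecMulVec t (t • u) v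
end
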